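/- Let m be an automorphism of 𝔻 written as m = r_τ ∘ b_α with α ∈ 𝔻, τ ∈ 𝕋, and assume |τ - 1| > 2|α|. Then m has exactly one fixed point in the closed unit disc, and that fixed point lies in the open disc 𝔻. -/

import Mathlib

/-!
A point `z` of the closed disc is fixed by `m = r_τ ∘ b_α` exactly when it is a root of
`conj α z² + (τ - 1) z - τ α`, since the denominator `1 - conj α z` cannot vanish there.
The roots of this quadratic have product of modulus `|τ α| / |α| = 1` and sum of modulus
`|τ - 1| / |α| > 2`, so one lies strictly inside and the other strictly outside the disc
(for `α = 0` the equation degenerates to `(τ - 1) z = 0`).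
-/

open Complex

lemma lt_one_lt_or_lt_one_lt_of_mul_eq_one {x y : ℝ} (hx : 0 ≤ x) (hxy : x * y = 1)
    (hsum : 2 < x + y) : x < 1 ∧ 1 < y ∨ y < 1 ∧ 1 < x := by
  rcases lt_trichotomy x 1 with h | rfl | h
  · exact .inl ⟨h, by nlinarith⟩
  · linarith
  · exact .inr ⟨by nlinarith, h⟩

lemma exists_quadratic_roots {K : Type*} [Field K] [IsAlgClosed K] [NeZero (2 : K)]
    {a b c : K} (ha : a ≠ 0) :
    ∃ r₁ r₂ : K, r₁ + r₂ = -b / a ∧ r₁ * r₂ = c / a ∧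
      ∀ x, a * (x * x) + b * x + c = 0 ↔ x = r₁ ∨ x = r₂ := by
  obtain ⟨s, hs⟩ := IsAlgClosed.exists_eq_mul_self (discrim a b c)
  refine ⟨(-b + s) / (2 * a), (-b - s) / (2 * a), ?_, ?_, quadratic_eq_zero_iff ha hs⟩
  · field_simp
    ring
  · rw [discrim] at hs
    field_simp
    linear_combination hs

lemma exists_unique_root_norm_lt_one {a b c : ℂ} (hca : ‖c‖ = ‖a‖) (hba : 2 * ‖a‖ < ‖b‖) :
    ∃ z₀ : ℂ, ‖z₀‖ < 1 ∧ a * (z₀ * z₀) + b * z₀ + c = 0 ∧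
      ∀ z : ℂ, ‖z‖ ≤ 1 → a * (z * z) + b * z + c = 0 → z = z₀ := by
  rcases eq_or_ne a 0 with rfl | ha
  · have hc : c = 0 := norm_eq_zero.1 (by simpa using hca)
    have hb : b ≠ 0 := norm_pos_iff.1 (by simpa using hba)
    refine ⟨0, by simp, by simp [hc], fun z _ hz ↦ ?_⟩
    simpa [hc, hb] using hz
  obtain ⟨r₁, r₂, hsum, hprod, hroots⟩ := exists_quadratic_roots (c := c) (b := b) ha
  have hnorm_a : 0 < ‖a‖ := norm_pos_iff.2 ha
  have hprod_norm : ‖r₁‖ * ‖r₂‖ = 1 := by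
    rw [← norm_mul, hprod, norm_div, hca, div_self hnorm_a.ne']
  have hsum_norm : 2 < ‖r₁‖ + ‖r₂‖ := calc
    2 < ‖b‖ / ‖a‖ := (lt_div_iff₀ hnorm_a).2 hba
    _ = ‖r₁ + r₂‖ := by rw [hsum, norm_div, norm_neg]
    _ ≤ ‖r₁‖ + ‖r₂‖ := norm_add_le _ _
  have unique_of_inside {z₀ w : ℂ} (hz₀ : ‖z₀‖ < 1) (hw : 1 < ‖w‖)
      (hroots' : ∀ x, a * (x * x) + b * x + c = 0 ↔ x = z₀ ∨ x = w) :
      ∃ z₀ : ℂ, ‖z₀‖ < 1 ∧ a * (z₀ * z₀) + b * z₀ + c = 0 ∧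
        ∀ z : ℂ, ‖z‖ ≤ 1 → a * (z * z) + b * z + c = 0 → z = z₀ := by
    refine ⟨z₀, hz₀, (hroots' z₀).2 (.inl rfl), fun z hz hroot ↦ ?_⟩
    rcases (hroots' z).1 hroot with rfl | rfl
    · rfl
    · linarith
  rcases lt_one_lt_or_lt_one_lt_of_mul_eq_one (norm_nonneg r₁) hprod_norm hsum_norm with
    ⟨h₁, h₂⟩ | ⟨h₂, h₁⟩
  · exact unique_of_inside h₁ h₂ hroots
  · exact unique_of_inside h₂ h₁ fun x ↦ (hroots x).trans or_comm

lemma one_sub_conj_mul_ne_zero {α z : ℂ} (hα : ‖α‖ < 1) (hz : ‖z‖ ≤ 1) :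
    1 - starRingEnd ℂ α * z ≠ 0 := by
  refine sub_ne_zero.2 fun h ↦ ?_
  have : ‖starRingEnd ℂ α * z‖ < 1 := by
    rw [norm_mul, norm_conj]
    exact mul_lt_one_of_nonneg_of_lt_one_left (norm_nonneg α) hα hz
  simp [← h] at this

lemma rotation_blaschke_eq_self_iff {α τ z : ℂ} (hα : ‖α‖ < 1) (hz : ‖z‖ ≤ 1) :
    τ * ((z - α) / (1 - starRingEnd ℂ α * z)) = z ↔
      starRingEnd ℂ α * (z * z) + (τ - 1) * z + -(τ * α) = 0 := by
  rw [mul_div_assoc', div_eq_iff (one_sub_conj_mul_ne_zero hα hz)]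
  constructor <;> intro h <;> linear_combination h

theorem elliptic_one_fixed_point (α τ : ℂ) (hα : ‖α‖ < 1) (hτ : ‖τ‖ = 1)
    (hell : ‖τ - 1‖ > 2 * ‖α‖) :
    ∃ z₀ : ℂ, ‖z₀‖ < 1 ∧ τ * ((z₀ - α) / (1 - (starRingEnd ℂ) α * z₀)) = z₀ ∧
      ∀ z : ℂ, ‖z‖ ≤ 1 →
        τ * ((z - α) / (1 - (starRingEnd ℂ) α * z)) = z → z = z₀ := by
  obtain ⟨z₀, hz₀, hroot, huniq⟩ :=
    exists_unique_root_norm_lt_one (a := starRingEnd ℂ α) (b := τ - 1) (c := -(τ * α))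
      (by simp [hτ]) (by simpa using hell)
  exact ⟨z₀, hz₀, (rotation_blaschke_eq_self_iff hα hz₀.le).2 hroot,
    fun z hz hfix ↦ huniq z hz ((rotation_blaschke_eq_self_iff hα hz).1 hfix)⟩
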